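/- Let N ≥ 1 be an integer, let y_1, …, y_N be pairwise distinct real numbers, and let z ∈ ℂ with z ≠ y_i for all i. Then (1/N)·∑_{i=1}^N [∏_{j≠i} (y_i − y_j + 1/N)/(y_i − y_j)] · 1/(z − y_i) = ∏_{i=1}^N (1 + (1/N)·1/(z − y_i)) − 1. -/

import Mathlib

/-!
Writing `w i = v i - c`, the product `∏ (1 + c / (x - v i))` is `nodal w / nodal v` evaluated at
`x`. Both nodal polynomials are monic of degree `#s`, so their difference has degree `< #s` and
its quotient by `nodal v` decomposes into partial fractions over the nodes `v i` (barycentric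
Lagrange interpolation). The residue at `v i` is `nodalWeight v i · nodal w (v i)`, and
`nodal w (v i) = c · ∏_{j ≠ i} (v i - v j + c)` because the factor `j = i` equals `c`.
-/

open Finset Polynomial

namespace Lagrange

theorem degree_nodal_sub_nodal_lt {R : Type*} [CommRing R] [Nontrivial R] {ι : Type*}
    (s : Finset ι) (v w : ι → R) : (nodal s w - nodal s v).degree < #s := by
  simpa only [degree_nodal] using
    degree_sub_lt_left (by rw [degree_nodal, degree_nodal]) (nodal_ne_zero (R := R))
      (nodal_monic.leadingCoeff.trans nodal_monic.leadingCoeff.symm)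

variable {F : Type*} [Field F] {ι : Type*} [DecidableEq ι] {s : Finset ι} {v : ι → F} {x : F}

theorem eval_div_eval_nodal_eq_sum (hvs : Set.InjOn v s) {f : F[X]} (hf : f.degree < #s)
    (hx : ∀ i ∈ s, x ≠ v i) :
    f.eval x / (nodal s v).eval x = ∑ i ∈ s, nodalWeight s v i * (x - v i)⁻¹ * f.eval (v i) := by
  rw [div_eq_iff (eval_nodal_not_at_node hx), mul_comm, ← eval_interpolate_not_at_node _ hx,
    ← eq_interpolate hvs hf]

theorem prod_one_add_mul_inv_sub_one (hvs : Set.InjOn v s) (c : F) (hx : ∀ i ∈ s, x ≠ v i) :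
    ∏ i ∈ s, (1 + c * (x - v i)⁻¹) - 1 =
      c * ∑ i ∈ s, (∏ j ∈ s.erase i, (v i - v j + c) / (v i - v j)) * (x - v i)⁻¹ := by
  have hxv : ∀ i ∈ s, x - v i ≠ 0 := fun i hi => sub_ne_zero.mpr (hx i hi)
  have hquot : ∏ i ∈ s, (1 + c * (x - v i)⁻¹) - 1 =
      (nodal s (fun i => v i - c) - nodal s v).eval x / (nodal s v).eval x := by
    rw [eval_sub, sub_div, div_self (eval_nodal_not_at_node hx), eval_nodal, eval_nodal,
      ← prod_div_distrib]
    refine congrArg (· - 1) (prod_congr rfl fun i hi => ?_)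
    field_simp [hxv i hi]
    ring
  have hnode : ∀ i ∈ s, (nodal s (fun i => v i - c) - nodal s v).eval (v i) =
      c * ∏ j ∈ s.erase i, (v i - v j + c) := by
    intro i hi
    rw [eval_sub, eval_nodal_at_node hi, sub_zero, eval_nodal, ← mul_prod_erase _ _ hi]
    congr 1
    · ring
    · exact prod_congr rfl fun j _ => by ring
  rw [hquot, eval_div_eval_nodal_eq_sum hvs (degree_nodal_sub_nodal_lt _ _ _) hx, mul_sum]
  refine sum_congr rfl fun i hi => ?_
  rw [hnode i hi, nodalWeight]
  simp only [div_eq_mul_inv, prod_mul_distrib]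
  ring

end Lagrange

theorem stmt_0_general (N : ℕ) (y : Fin N → ℝ) (hy : Function.Injective y)
    (z : ℂ) (hz : ∀ i, z ≠ (y i : ℂ)) :
    (1 / (N : ℂ)) *
        ∑ i : Fin N,
          (∏ j ∈ Finset.univ.erase i,
              (((y i : ℂ) - (y j : ℂ) + 1 / (N : ℂ)) / ((y i : ℂ) - (y j : ℂ)))) *
            (1 / (z - (y i : ℂ)))
      = (∏ i : Fin N, (1 + (1 / (N : ℂ)) * (1 / (z - (y i : ℂ))))) - 1 := by
  simp only [one_div (z - _)]
  exact (Lagrange.prod_one_add_mul_inv_sub_one (Complex.ofReal_injective.comp hy).injOn _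
    fun i _ => hz i).symm

/-- **Lemma 3.2 (Stieltjes transform of the Perelomov–Popov measure).**
For `N ≥ 1`, pairwise distinct reals `y₁, …, y_N` and `z ∈ ℂ` different from all `yᵢ`,
`(1/N)·∑ᵢ [∏_{j≠i} (yᵢ − yⱼ + 1/N)/(yᵢ − yⱼ)] · 1/(z − yᵢ)
  = ∏ᵢ (1 + (1/N)·1/(z − yᵢ)) − 1`. -/
theorem stmt_0 (N : ℕ) (hN : 1 ≤ N) (y : Fin N → ℝ) (hy : Function.Injective y)
    (z : ℂ) (hz : ∀ i, z ≠ (y i : ℂ)) :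
    (1 / (N : ℂ)) *
        ∑ i : Fin N,
          (∏ j ∈ Finset.univ.erase i,
              (((y i : ℂ) - (y j : ℂ) + 1 / (N : ℂ)) / ((y i : ℂ) - (y j : ℂ)))) *
            (1 / (z - (y i : ℂ)))
      = (∏ i : Fin N, (1 + (1 / (N : ℂ)) * (1 / (z - (y i : ℂ))))) - 1 :=
  stmt_0_general N y hy z hz
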